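/- arXiv:1901.08961 — 2 statements merged into one kernel-verified Lean document; each statement's English description precedes it below -/
import Mathlib

section
/- Let 𝒯₀ be an E-closed family of complete theories and let 𝒯₀' ⊆ 𝒯₀ be a generating set for 𝒯₀, i.e., Cl_E(𝒯₀') = 𝒯₀. Then the following are equivalent: (1) 𝒯₀' is the least generating set for 𝒯₀, i.e., 𝒯₀' is contained in every 𝒯'' ⊆ 𝒯₀ with Cl_E(𝒯'') = 𝒯₀; (2) 𝒯₀' is a minimal generating set for 𝒯₀, i.e., no proper subset of 𝒯₀' generates 𝒯₀; (3) every T ∈ 𝒯₀' contains a sentence φ with (𝒯₀')_φ = {T}; (4) every T ∈ 𝒯₀' contains a sentence φ with (𝒯₀)_φ = {T}; (5) every T ∈ 𝒯₀' contains a finite disjunction of 𝒯₀'-complete sentences; (6) every T ∈ 𝒯₀' contains a finite disjunction of 𝒯₀-complete sentences. -/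
open FirstOrder Language Set

universe u v

namespace Approx

variable {L : FirstOrder.Language.{u, v}}

/-- A complete theory: a satisfiable set of sentences deciding every sentence. -/
def CompleteTheory (T : L.Theory) : Prop :=
  T.IsSatisfiable ∧ ∀ φ : L.Sentence, φ ∈ T ∨ φ.not ∈ T

/-- `T` is `𝒯`-approximated: `T ∉ 𝒯` and every sentence of `T` lies in some member of `𝒯`. -/
def Approximated (𝒯 : Set L.Theory) (T : L.Theory) : Prop :=
  T ∉ 𝒯 ∧ ∀ φ ∈ T, ∃ T' ∈ 𝒯, φ ∈ T'

/-- The `φ`-neighbourhood `𝒯_φ` of a family of theories. -/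
def Nbhd (𝒯 : Set L.Theory) (φ : L.Sentence) : Set L.Theory :=
  {T' ∈ 𝒯 | φ ∈ T'}

/-- An accumulation point of `𝒯`: a complete theory each of whose sentences has an
infinite neighbourhood in `𝒯`. -/
def AccPoint (𝒯 : Set L.Theory) (T : L.Theory) : Prop :=
  CompleteTheory T ∧ ∀ φ ∈ T, (Nbhd 𝒯 φ).Infinite

/-- The `E`-closure of `𝒯`: `𝒯` together with all its accumulation points. -/
def ClE (𝒯 : Set L.Theory) : Set L.Theory :=
  𝒯 ∪ {T | AccPoint 𝒯 T}

/-- A sentence `ψ` is `𝒯`-complete if the neighbourhood `𝒯_ψ` is a singleton. -/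
def TComplete {L : FirstOrder.Language.{u, v}} (𝒯 : Set L.Theory) (ψ : L.Sentence) : Prop :=
  ∃ S : L.Theory, Nbhd 𝒯 ψ = {S}

/-- The (finite) disjunction of a list of sentences. -/
def disjList {L : FirstOrder.Language.{u, v}} (l : List L.Sentence) : L.Sentence :=
  l.foldr (· ⊔ ·) ⊥

/-!
A member `T` of a family `𝒯` of complete theories is either isolated in `𝒯` by a sentence or
an accumulation point of `𝒯`: if some `φ ∈ T` has only finitely many `𝒯`-neighbours, then `φ`
conjoined with sentences separating `T` from these neighbours isolates `T`. A finite
neighbourhood rules out accumulation points, so isolation in a generating set persists in its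
closure and isolated members survive in every generating set, while a non-isolated member of a
generating set can be removed from it without changing its `E`-closure. A finite disjunction of
`𝒯`-complete sentences lies in `T` exactly when one of them does, and that one then isolates `T`.
-/

theorem realize_disjList {M : Type*} [L.Structure M] (l : List L.Sentence) :
    M ⊨ disjList l ↔ ∃ ψ ∈ l, M ⊨ ψ := by
  induction l with
  | nil => simp [disjList]
  | cons a l ih => simp [disjList, ← ih]

namespace CompleteTheory

variable {T : L.Theory} (hT : CompleteTheory T)
include hT

theorem mem_iff_realize {φ : L.Sentence} (M : Type*) [L.Structure M] [M ⊨ T] [Nonempty M] :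
    φ ∈ T ↔ M ⊨ φ :=
  (Theory.IsMaximal.mem_iff_models hT φ).trans
    ((Theory.IsMaximal.isComplete hT).realize_sentence_iff φ M).symm

theorem inf_mem_iff {φ ψ : L.Sentence} : φ ⊓ ψ ∈ T ↔ φ ∈ T ∧ ψ ∈ T := by
  obtain ⟨M⟩ := hT.1
  simp only [hT.mem_iff_realize M, Sentence.realize_inf]

theorem top_mem : (⊤ : L.Sentence) ∈ T := by
  obtain ⟨M⟩ := hT.1
  exact (hT.mem_iff_realize M).2 (Sentence.realize_top M)

theorem disjList_mem_iff {l : List L.Sentence} : disjList l ∈ T ↔ ∃ ψ ∈ l, ψ ∈ T := by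
  obtain ⟨M⟩ := hT.1
  simp only [hT.mem_iff_realize M, realize_disjList]

theorem eq_of_subset {S : L.Theory} (hS : CompleteTheory S) (h : T ⊆ S) : T = S := by
  refine Subset.antisymm h fun χ hχ => ?_
  obtain ⟨M⟩ := hS.1
  have : (M : Type _) ⊨ T := Theory.Model.mono M.is_model h
  exact (hT.mem_iff_realize M).2 (S.realize_sentence_of_mem hχ)

theorem exists_mem_not_mem {S : L.Theory} (hS : CompleteTheory S) (hne : S ≠ T) :
    ∃ χ ∈ T, χ ∉ S := by
  by_contra! h
  exact hne (hT.eq_of_subset hS h).symm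

theorem exists_mem_forall_not_mem {F : Set L.Theory} (hF : F.Finite)
    (hFc : ∀ S ∈ F, CompleteTheory S) (hTF : T ∉ F) : ∃ χ ∈ T, ∀ S ∈ F, χ ∉ S := by
  induction F, hF using Set.Finite.induction_on with
  | empty => exact ⟨⊤, hT.top_mem, fun _ h => h.elim⟩
  | @insert S F _ _ ih =>
    obtain ⟨χ, hχ, hχF⟩ :=
      ih (fun S' hS' => hFc S' (mem_insert_of_mem S hS')) (hTF ∘ mem_insert_of_mem S)
    obtain ⟨χ', hχ', hχ'S⟩ :=
      hT.exists_mem_not_mem (hFc S (mem_insert S F)) (ne_of_mem_of_not_mem (mem_insert S F) hTF)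
    refine ⟨χ ⊓ χ', hT.inf_mem_iff.2 ⟨hχ, hχ'⟩, ?_⟩
    intro S' hS' h
    have hS'c := (hFc S' hS').inf_mem_iff.1 h
    rcases hS' with rfl | hS'
    · exact hχ'S hS'c.2
    · exact hχF S' hS' hS'c.1

end CompleteTheory

section Nbhd

variable {𝒮 𝒯 : Set L.Theory} {T : L.Theory} {φ : L.Sentence}

theorem nbhd_mono (h : 𝒮 ⊆ 𝒯) (φ : L.Sentence) : Nbhd 𝒮 φ ⊆ Nbhd 𝒯 φ :=
  fun _ hS => ⟨h hS.1, hS.2⟩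

theorem nbhd_diff_singleton (𝒯 : Set L.Theory) (T : L.Theory) (φ : L.Sentence) :
    Nbhd (𝒯 \ {T}) φ = Nbhd 𝒯 φ \ {T} := by
  ext S
  simp only [Nbhd, mem_sdiff, mem_ofPred_eq, and_right_comm]

theorem AccPoint.mono (hT : AccPoint 𝒮 T) (h : 𝒮 ⊆ 𝒯) : AccPoint 𝒯 T :=
  ⟨hT.1, fun φ hφ => (hT.2 φ hφ).mono (nbhd_mono h φ)⟩

theorem AccPoint.diff_singleton (hT : AccPoint 𝒯 T) (S : L.Theory) : AccPoint (𝒯 \ {S}) T :=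
  ⟨hT.1, fun φ hφ => by
    rw [nbhd_diff_singleton]
    exact (hT.2 φ hφ).sdiff (finite_singleton S)⟩

theorem clE_mono (h : 𝒮 ⊆ 𝒯) : ClE 𝒮 ⊆ ClE 𝒯 :=
  union_subset_union h fun _ hT => AccPoint.mono hT h

theorem clE_diff_singleton (hT : AccPoint 𝒯 T) : ClE (𝒯 \ {T}) = ClE 𝒯 := by
  refine Subset.antisymm (clE_mono sdiff_subset) ?_
  rintro S (hS | hS)
  · by_cases hST : S = T
    · exact Or.inr (hST ▸ hT.diff_singleton T)
    · exact Or.inl ⟨hS, hST⟩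
  · exact Or.inr (AccPoint.diff_singleton hS T)

theorem nbhd_clE_of_finite (h : (Nbhd 𝒯 φ).Finite) : Nbhd (ClE 𝒯) φ = Nbhd 𝒯 φ := by
  refine Subset.antisymm ?_ (nbhd_mono subset_union_left φ)
  rintro S ⟨hS | hS, hφ⟩
  · exact ⟨hS, hφ⟩
  · exact absurd h (hS.2 φ hφ)

variable (h𝒯 : ∀ S ∈ 𝒯, CompleteTheory S) (hT : T ∈ 𝒯)
include h𝒯 hT

theorem exists_nbhd_eq_singleton_of_finite (hφ : φ ∈ T) (hfin : (Nbhd 𝒯 φ).Finite) :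
    ∃ Φ ∈ T, Nbhd 𝒯 Φ = {T} := by
  have hTc := h𝒯 T hT
  obtain ⟨χ, hχ, hχsep⟩ := hTc.exists_mem_forall_not_mem (hfin.sdiff (t := {T}))
    (fun S hS => h𝒯 S hS.1.1) (fun h => h.2 rfl)
  refine ⟨φ ⊓ χ, hTc.inf_mem_iff.2 ⟨hφ, hχ⟩, Subset.antisymm ?_ ?_⟩
  · rintro S ⟨hS, hφχ⟩
    have hφχ' := (h𝒯 S hS).inf_mem_iff.1 hφχ
    by_contra hST
    exact hχsep S ⟨⟨hS, hφχ'.1⟩, hST⟩ hφχ'.2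
  · rintro S rfl
    exact ⟨hT, hTc.inf_mem_iff.2 ⟨hφ, hχ⟩⟩

theorem exists_nbhd_eq_singleton_or_accPoint :
    (∃ φ ∈ T, Nbhd 𝒯 φ = {T}) ∨ AccPoint 𝒯 T := by
  by_contra! h
  refine h.2 ⟨h𝒯 T hT, fun φ hφ hfin => ?_⟩
  obtain ⟨Φ, hΦ, hΦT⟩ := exists_nbhd_eq_singleton_of_finite h𝒯 hT hφ hfin
  exact h.1 Φ hΦ hΦT

end Nbhd

theorem exists_nbhd_eq_singleton_iff_disjList {𝒯 : Set L.Theory} {T : L.Theory}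
    (hTc : CompleteTheory T) (hT : T ∈ 𝒯) :
    (∃ φ ∈ T, Nbhd 𝒯 φ = {T}) ↔
      ∃ l : List L.Sentence, l ≠ [] ∧ (∀ ψ ∈ l, TComplete 𝒯 ψ) ∧ disjList l ∈ T := by
  constructor
  · rintro ⟨φ, hφ, hφT⟩
    refine ⟨[φ], List.cons_ne_nil φ [], fun ψ hψ => ⟨T, List.mem_singleton.1 hψ ▸ hφT⟩,
      hTc.disjList_mem_iff.2 ⟨φ, List.mem_singleton_self φ, hφ⟩⟩
  · rintro ⟨l, -, hl, hlT⟩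
    obtain ⟨ψ, hψl, hψ⟩ := hTc.disjList_mem_iff.1 hlT
    obtain ⟨S, hψS⟩ := hl ψ hψl
    have hTS : T ∈ Nbhd 𝒯 ψ := ⟨hT, hψ⟩
    rw [hψS, mem_singleton_iff] at hTS
    exact ⟨ψ, hψ, hTS ▸ hψS⟩

theorem least_generating_set_tfae_general
    {L : FirstOrder.Language.{u, v}}
    (𝒯₀ 𝒯₀' : Set L.Theory) (h𝒯₀ : ∀ S ∈ 𝒯₀, CompleteTheory S)
    (hsub : 𝒯₀' ⊆ 𝒯₀) (hgen : ClE 𝒯₀' = 𝒯₀) :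
    List.TFAE
      [ ∀ 𝒮 : Set L.Theory, 𝒮 ⊆ 𝒯₀ → ClE 𝒮 = 𝒯₀ → 𝒯₀' ⊆ 𝒮,
        ∀ 𝒮 : Set L.Theory, 𝒮 ⊂ 𝒯₀' → ClE 𝒮 ≠ 𝒯₀,
        ∀ T ∈ 𝒯₀', ∃ φ ∈ T, Nbhd 𝒯₀' φ = {T},
        ∀ T ∈ 𝒯₀', ∃ φ ∈ T, Nbhd 𝒯₀ φ = {T},
        ∀ T ∈ 𝒯₀', ∃ l : List L.Sentence, l ≠ [] ∧
          (∀ ψ ∈ l, TComplete 𝒯₀' ψ) ∧ disjList l ∈ T,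
        ∀ T ∈ 𝒯₀', ∃ l : List L.Sentence, l ≠ [] ∧
          (∀ ψ ∈ l, TComplete 𝒯₀ ψ) ∧ disjList l ∈ T ] := by
  have h𝒯₀' : ∀ S ∈ 𝒯₀', CompleteTheory S := fun S hS => h𝒯₀ S (hsub hS)
  tfae_have 1 → 2 := fun h1 𝒮 h𝒮 hcl => h𝒮.not_subset (h1 𝒮 (h𝒮.subset.trans hsub) hcl)
  tfae_have 2 → 3 := fun h2 T hT =>
    (exists_nbhd_eq_singleton_or_accPoint h𝒯₀' hT).resolve_right fun hacc =>
      h2 _ (sdiff_singleton_ssubset.2 hT) (by rw [clE_diff_singleton hacc, hgen])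
  tfae_have 3 → 4 := fun h3 T hT => by
    obtain ⟨φ, hφ, hφT⟩ := h3 T hT
    refine ⟨φ, hφ, ?_⟩
    rw [← hgen, nbhd_clE_of_finite (hφT ▸ finite_singleton T), hφT]
  tfae_have 4 → 1 := fun h4 𝒮 h𝒮 hcl T hT => by
    obtain ⟨φ, hφ, hφT⟩ := h4 T hT
    have hfin : (Nbhd 𝒮 φ).Finite := (finite_singleton T).subset (hφT ▸ nbhd_mono h𝒮 φ)
    have hT𝒮 : T ∈ Nbhd (ClE 𝒮) φ := ⟨hcl ▸ hsub hT, hφ⟩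
    rw [nbhd_clE_of_finite hfin] at hT𝒮
    exact hT𝒮.1
  tfae_have 3 ↔ 5 := forall₂_congr fun T hT =>
    exists_nbhd_eq_singleton_iff_disjList (h𝒯₀' T hT) hT
  tfae_have 4 ↔ 6 := forall₂_congr fun T hT =>
    exists_nbhd_eq_singleton_iff_disjList (h𝒯₀' T hT) (hsub hT)
  tfae_finish

/-- for a generating set `𝒯₀'` of an `E`-closed family `𝒯₀` the following are
equivalent: (1) `𝒯₀'` is the least generating set; (2) `𝒯₀'` is a minimal generating
set; (3) every member is isolated by a sentence in `𝒯₀'`; (4) every member is isolated by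
a sentence in `𝒯₀`; (5) every member contains a finite disjunction of `𝒯₀'`-complete
sentences; (6) every member contains a finite disjunction of `𝒯₀`-complete sentences. -/
theorem least_generating_set_tfae
    {L : FirstOrder.Language.{u, v}} [L.IsRelational]
    (𝒯₀ 𝒯₀' : Set L.Theory) (h𝒯₀ : ∀ S ∈ 𝒯₀, CompleteTheory S)
    (hclosed : ClE 𝒯₀ = 𝒯₀) (hsub : 𝒯₀' ⊆ 𝒯₀) (hgen : ClE 𝒯₀' = 𝒯₀) :
    List.TFAE
      [ ∀ 𝒮 : Set L.Theory, 𝒮 ⊆ 𝒯₀ → ClE 𝒮 = 𝒯₀ → 𝒯₀' ⊆ 𝒮,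
        ∀ 𝒮 : Set L.Theory, 𝒮 ⊂ 𝒯₀' → ClE 𝒮 ≠ 𝒯₀,
        ∀ T ∈ 𝒯₀', ∃ φ ∈ T, Nbhd 𝒯₀' φ = {T},
        ∀ T ∈ 𝒯₀', ∃ φ ∈ T, Nbhd 𝒯₀ φ = {T},
        ∀ T ∈ 𝒯₀', ∃ l : List L.Sentence, l ≠ [] ∧
          (∀ ψ ∈ l, TComplete 𝒯₀' ψ) ∧ disjList l ∈ T,
        ∀ T ∈ 𝒯₀', ∃ l : List L.Sentence, l ≠ [] ∧
          (∀ ψ ∈ l, TComplete 𝒯₀ ψ) ∧ disjList l ∈ T ] :=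
  least_generating_set_tfae_general 𝒯₀ 𝒯₀' h𝒯₀ hsub hgen

end Approx
end

section
/- Let L be a language all of whose relation symbols are unary (and with no function or constant symbols), and let T be a complete L-theory whose models are infinite. Then T is countably approximable: there exists a countable family 𝒯 of complete L-theories with T ∉ 𝒯 such that every sentence φ ∈ T belongs to some member of 𝒯. -/
open FirstOrder Language Set

universe u v

namespace Approx

variable {L : FirstOrder.Language.{u, v}}

/-!
If `L` has infinitely many relation symbols `R₀, R₁, …`, let `Mₖ` be a model `M` of `T` in which
`Rₖ` is reinterpreted as a constant predicate, chosen so that `Mₖ` and `M` disagree on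
`∃ x̄, Rₖ x̄`. A sentence mentions only finitely many symbols, so it avoids some `Rₖ`, and then it
holds in `Mₖ` as soon as it holds in `M`.

Otherwise `L` is finite and unary. An element is then described by its colour, the set of
predicates it satisfies, and a back-and-forth argument shows that a sentence of quantifier depth
at most `K` is decided by the sizes of the colour classes truncated at `K`. Keeping `min K |C|`
points of every colour class `C` of `M` gives a finite structure, hence not a model of `T`, which
satisfies every sentence of `T` of depth at most `K`.
-/

def CountablyApproximable (T : L.Theory) : Prop :=
  ∃ 𝒯 : Set L.Theory, 𝒯.Countable ∧ (∀ S ∈ 𝒯, CompleteTheory S) ∧ Approximated 𝒯 T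

theorem CompleteTheory.eq_completeTheory {T : L.Theory} (hT : CompleteTheory T)
    (M : Type*) [L.Structure M] [M ⊨ T] : T = L.completeTheory M := by
  ext φ
  refine ⟨fun h => Theory.realize_sentence_of_mem T h, fun h => ?_⟩
  refine (hT.2 φ).resolve_right fun hn => ?_
  exact (Sentence.realize_not M).1 (Theory.realize_sentence_of_mem T hn) h

theorem countablyApproximable_completeTheory_of_cover {M : Type*} [L.Structure M] {ι : Type*}
    [Countable ι] (N : ι → Type*) [S : ∀ i, L.Structure (N i)] [∀ i, Nonempty (N i)]
    (hne : ∀ i, ∃ φ : L.Sentence, M ⊨ φ ∧ ¬ N i ⊨ φ)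
    (hcover : ∀ φ : L.Sentence, M ⊨ φ → ∃ i, N i ⊨ φ) :
    CountablyApproximable (L.completeTheory M) := by
  refine ⟨range fun i => L.completeTheory (N i), countable_range _, ?_, ?_, ?_⟩
  · rintro _ ⟨i, rfl⟩
    exact ⟨completeTheory.isSatisfiable L _, completeTheory.mem_or_not_mem L _⟩
  · rintro ⟨i, hi : L.completeTheory (N i) = _⟩
    obtain ⟨φ, hM, hN⟩ := hne i
    exact hN (mem_completeTheory.1 (hi ▸ mem_completeTheory.2 hM))
  · intro φ hφ
    obtain ⟨i, hi⟩ := hcover φ hφ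
    exact ⟨_, mem_range_self i, hi⟩

theorem exists_sentence_of_infinite_of_finite (M N : Type*) [L.Structure M] [L.Structure N]
    [Infinite M] [Finite N] : ∃ φ : L.Sentence, M ⊨ φ ∧ ¬ N ⊨ φ := by
  refine ⟨Sentence.cardGe L (Nat.card N + 1), ?_, ?_⟩
  · rw [Sentence.realize_cardGe]
    exact Cardinal.natCast_lt_aleph0.le.trans (Cardinal.aleph0_le_mk M)
  · rw [Sentence.realize_cardGe, ← Nat.cast_card, Nat.cast_le]
    omega

section Reinterpretation

variable {α M : Type*}

def relSymbols {n : ℕ} : L.BoundedFormula α n → Set (Σ l, L.Relations l)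
  | .falsum => ∅
  | .equal _ _ => ∅
  | .rel R _ => {⟨_, R⟩}
  | .imp φ ψ => relSymbols φ ∪ relSymbols ψ
  | .all φ => relSymbols φ

theorem relSymbols_finite {n : ℕ} : ∀ φ : L.BoundedFormula α n, (relSymbols φ).Finite
  | .falsum => finite_empty
  | .equal _ _ => finite_empty
  | .rel _ _ => finite_singleton _
  | .imp φ ψ => (relSymbols_finite φ).union (relSymbols_finite ψ)
  | .all φ => relSymbols_finite φ

open Classical in
abbrev withRelConst (S : L.Structure M) (R : Σ l, L.Relations l) (P : Prop) : L.Structure M where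
  funMap := S.funMap
  RelMap {n} r xs := if (⟨n, r⟩ : Σ l, L.Relations l) = R then P else S.RelMap r xs

variable (S : L.Structure M) (R : Σ l, L.Relations l) (P : Prop)

theorem realize_term_withRelConst {β : Type*} (v : β → M) (t : L.Term β) :
    @Term.realize L M (withRelConst S R P) β v t = @Term.realize L M S β v t := by
  induction t with
  | var => rfl
  | func f ts ih => exact congrArg (S.funMap f) (funext ih)

theorem realize_withRelConst {n : ℕ} {φ : L.BoundedFormula α n} (hR : R ∉ relSymbols φ)
    (v : α → M) (xs : Fin n → M) :
    @BoundedFormula.Realize L M (withRelConst S R P) α n φ v xs ↔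
      @BoundedFormula.Realize L M S α n φ v xs := by
  induction φ with
  | falsum => rfl
  | equal t₁ t₂ =>
    exact Iff.of_eq (congrArg₂ (· = ·) (realize_term_withRelConst S R P _ t₁)
      (realize_term_withRelConst S R P _ t₂))
  | rel Q ts =>
    refine Iff.of_eq ((if_neg (Ne.symm hR)).trans ?_)
    exact congrArg _ (funext fun i => realize_term_withRelConst S R P _ (ts i))
  | imp φ ψ ihφ ihψ =>
    simp only [relSymbols, mem_union, not_or] at hR
    exact imp_congr (ihφ hR.1 xs) (ihψ hR.2 xs)
  | all φ ih =>
    exact forall_congr' fun x => ih hR (Fin.snoc xs x)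

def existsRel {l : ℕ} (R : L.Relations l) : L.Sentence :=
  (R.boundedFormula fun i => Term.var (Sum.inr i)).exs

theorem realize_existsRel {l : ℕ} (R : L.Relations l) :
    @Sentence.Realize L M S (existsRel R) ↔ ∃ xs : Fin l → M, S.RelMap R xs := by
  let _ := S
  simp [existsRel, Sentence.Realize, BoundedFormula.realize_rel]

theorem realize_existsRel_withRelConst [Nonempty M] :
    @Sentence.Realize L M (withRelConst S R P) (existsRel R.2) ↔ P := by
  rw [realize_existsRel]
  exact ⟨fun ⟨_, h⟩ => (if_pos rfl).mp h, fun h => ⟨Classical.arbitrary _, (if_pos rfl).mpr h⟩⟩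

end Reinterpretation

theorem countablyApproximable_of_infinite_relations [Infinite (Σ l, L.Relations l)]
    (M : Type*) [L.Structure M] [Nonempty M] : CountablyApproximable (L.completeTheory M) := by
  let R := Infinite.natEmbedding (Σ l, L.Relations l)
  let P k := ¬ M ⊨ existsRel (R k).2
  refine countablyApproximable_completeTheory_of_cover (fun _ : ℕ => M)
    (S := fun k => withRelConst ‹_› (R k) (P k)) (fun k => ?_) fun φ hφ => ?_
  · by_cases h : M ⊨ existsRel (R k).2
    · exact ⟨_, h, (realize_existsRel_withRelConst _ (R k) (P k)).not.2 (not_not.2 h)⟩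
    · exact ⟨_, (Sentence.realize_not M).2 h,
        not_not.2 ((realize_existsRel_withRelConst _ (R k) (P k)).2 h)⟩
  · obtain ⟨k, hk⟩ : ∃ k, R k ∉ relSymbols φ :=
      have ⟨_, ⟨k, hk⟩, h⟩ :=
        ((infinite_range_of_injective R.injective).sdiff (relSymbols_finite φ)).nonempty
      ⟨k, hk ▸ h⟩
    exact ⟨k, (realize_withRelConst _ (R k) (P k) hk default default).2 hφ⟩

theorem encard_image_le_of_factorsThrough {ι α β : Type*} {f : ι → α} {g : ι → β}
    (h : f.FactorsThrough g) (I : Set ι) : (f '' I).encard ≤ (g '' I).encard := by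
  rcases I.eq_empty_or_nonempty with rfl | ⟨i₀, -⟩
  · simp
  have hfg : f '' I = Function.extend g f (fun _ => f i₀) '' (g '' I) := by
    rw [image_image]
    exact image_congr fun i _ => (h.extend_apply _ i).symm
  exact hfg ▸ encard_image_le _ _

def quantifierDepth {α : Type*} {n : ℕ} : L.BoundedFormula α n → ℕ
  | .falsum | .equal _ _ | .rel _ _ => 0
  | .imp φ ψ => max (quantifierDepth φ) (quantifierDepth ψ)
  | .all φ => quantifierDepth φ + 1

theorem exists_eq_var_inr [L.IsRelational] {k : ℕ} (t : L.Term (Empty ⊕ Fin k)) :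
    ∃ i, t = Term.var (Sum.inr i) := by
  rcases t with (e | i) | ⟨f, _⟩
  · exact e.elim
  · exact ⟨i, rfl⟩
  · exact isEmptyElim f

section Unary

variable {X Y : Type*} [L.Structure X] [L.Structure Y]

def colorOf (x : X) : L.Relations 1 → Prop :=
  fun r => Structure.RelMap r fun _ => x

variable (X) in
def colorClass (c : L.Relations 1 → Prop) : Set X :=
  {x | colorOf x = c}

variable (L X Y) in
def ColorCountsAgreeUpTo (K : ℕ) : Prop :=
  ∀ c : L.Relations 1 → Prop,
    min (K : ℕ∞) (colorClass X c).encard = min (K : ℕ∞) (colorClass Y c).encard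

theorem ColorCountsAgreeUpTo.symm {K : ℕ} (h : ColorCountsAgreeUpTo L X Y K) :
    ColorCountsAgreeUpTo L Y X K :=
  fun c => (h c).symm

theorem ColorCountsAgreeUpTo.nonempty {K : ℕ} (h : ColorCountsAgreeUpTo L X Y (K + 1))
    [Nonempty Y] : Nonempty X := by
  obtain ⟨y⟩ := ‹Nonempty Y›
  have hy : 1 ≤ min ((K + 1 : ℕ) : ℕ∞) (colorClass Y (colorOf (L := L) y)).encard :=
    le_min (by simp) (one_le_encard_iff_nonempty.2 ⟨y, rfl⟩)
  rw [← h] at hy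
  exact (one_le_encard_iff_nonempty.1 (hy.trans (min_le_right _ _))).to_subtype.map Subtype.val

variable (L) in
def IsPartialIso {k : ℕ} (xs : Fin k → X) (ys : Fin k → Y) : Prop :=
  (∀ i j, xs i = xs j ↔ ys i = ys j) ∧ ∀ i, colorOf (L := L) (xs i) = colorOf (ys i)

namespace IsPartialIso

variable {k : ℕ} {xs : Fin k → X} {ys : Fin k → Y}

theorem symm (h : IsPartialIso L xs ys) : IsPartialIso L ys xs :=
  ⟨fun i j => (h.1 i j).symm, fun i => (h.2 i).symm⟩

theorem snoc (h : IsPartialIso L xs ys) {a : X} {b : Y} (hab : ∀ i, xs i = a ↔ ys i = b)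
    (hc : colorOf (L := L) a = colorOf b) :
    IsPartialIso L (Fin.snoc xs a : Fin (k + 1) → X) (Fin.snoc ys b : Fin (k + 1) → Y) := by
  refine ⟨fun i j => ?_, fun i => ?_⟩
  · induction i using Fin.lastCases <;> induction j using Fin.lastCases <;>
      simp only [Fin.snoc_castSucc, Fin.snoc_last, h.1, hab, eq_comm (a := a), eq_comm (a := b)]
  · induction i using Fin.lastCases <;> simp only [Fin.snoc_castSucc, Fin.snoc_last, h.2, hc]

/-- A new `b` lies in a colour class of `Y` with more than `|ys '' I|` points, `I` indexing the
points of `ys` of that colour. As `|ys '' I| ≤ k < K`, the class in `X` also has more than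
`|ys '' I| ≥ |xs '' I|` points, so one of them is not among the `xs i`. -/
theorem exists_snoc {K : ℕ} (hK : ColorCountsAgreeUpTo L X Y K) (hk : k < K)
    (h : IsPartialIso L xs ys) (b : Y) :
    ∃ a : X,
      IsPartialIso L (Fin.snoc xs a : Fin (k + 1) → X) (Fin.snoc ys b : Fin (k + 1) → Y) := by
  by_cases hb : ∃ i, ys i = b
  · obtain ⟨i, rfl⟩ := hb
    exact ⟨xs i, h.snoc (fun j => h.1 j i) (h.2 i)⟩
  push Not at hb
  set c : L.Relations 1 → Prop := colorOf b
  set I := {i | colorOf (ys i) = c}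
  have hxI : (xs '' I).encard ≤ (ys '' I).encard :=
    encard_image_le_of_factorsThrough (fun i j => (h.1 i j).2) I
  have hyI : (ys '' I).encard ≤ k :=
    (encard_image_le _ _).trans (by simpa using I.encard_le_card)
  have hY : (ys '' I).encard + 1 ≤ (colorClass Y c).encard := by
    have hb' : b ∉ ys '' I := fun ⟨i, _, hi⟩ => hb i hi
    rw [← encard_insert_of_notMem hb']
    exact encard_le_encard (insert_subset rfl (image_subset_iff.2 fun _ hi => hi))
  have hX : (ys '' I).encard + 1 ≤ (colorClass X c).encard := by
    have hle : (ys '' I).encard + 1 ≤ K := by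
      calc (ys '' I).encard + 1 ≤ k + 1 := by gcongr
        _ ≤ K := by exact_mod_cast hk
    exact ((le_min hle hY).trans_eq (hK c).symm).trans (min_le_right _ _)
  have hlt : (xs '' I).encard < (colorClass X c).encard :=
    hxI.trans_lt ((ENat.lt_add_one_iff (hyI.trans_lt (by simp)).ne).2 le_rfl |>.trans_le hX)
  obtain ⟨a, ha, hna⟩ := not_subset.1 fun hsub => (encard_le_encard hsub).not_gt hlt
  refine ⟨a, h.snoc (fun i => iff_of_false ?_ (hb i)) ha⟩
  rintro rfl
  exact hna (mem_image_of_mem xs ((h.2 i).symm.trans ha))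

theorem realize_iff [L.IsRelational] (hunary : ∀ n, n ≠ 1 → IsEmpty (L.Relations n)) {K : ℕ}
    (hK : ColorCountsAgreeUpTo L X Y K) {φ : L.BoundedFormula Empty k}
    (hφ : quantifierDepth φ + k ≤ K) (h : IsPartialIso L xs ys) (v : Empty → X) (w : Empty → Y) :
    φ.Realize v xs ↔ φ.Realize w ys := by
  induction φ with
  | falsum => rfl
  | equal t₁ t₂ =>
    obtain ⟨i, rfl⟩ := exists_eq_var_inr t₁
    obtain ⟨j, rfl⟩ := exists_eq_var_inr t₂
    exact h.1 i j
  | @rel _ l R ts =>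
    obtain rfl : l = 1 := by_contra fun hl => (hunary l hl).false R
    obtain ⟨i, hi⟩ := exists_eq_var_inr (ts 0)
    obtain rfl : ts = fun _ => Term.var (Sum.inr i) :=
      funext fun j => Subsingleton.elim j 0 ▸ hi
    exact iff_of_eq (congrFun (h.2 i) R)
  | imp φ ψ ihφ ihψ =>
    simp only [quantifierDepth] at hφ
    exact imp_congr (ihφ (by omega) h) (ihψ (by omega) h)
  | all φ ih =>
    simp only [quantifierDepth] at hφ
    refine ⟨fun hx b => ?_, fun hy a => ?_⟩
    · obtain ⟨a, ha⟩ := h.exists_snoc hK (by omega) b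
      exact (ih (by omega) ha).1 (hx a)
    · obtain ⟨b, hb⟩ := h.symm.exists_snoc hK.symm (by omega) a
      exact (ih (by omega) hb.symm).2 (hy b)

end IsPartialIso

theorem realize_sentence_iff_of_colorCountsAgreeUpTo [L.IsRelational]
    (hunary : ∀ n, n ≠ 1 → IsEmpty (L.Relations n)) {K : ℕ}
    (hK : ColorCountsAgreeUpTo L X Y K) {φ : L.Sentence} (hφ : quantifierDepth φ ≤ K) :
    X ⊨ φ ↔ Y ⊨ φ :=
  IsPartialIso.realize_iff hunary hK hφ ⟨finZeroElim, finZeroElim⟩ default default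

theorem encard_colorClass_substructure {M : Type*} [L.Structure M] (S : L.Substructure M)
    (c : L.Relations 1 → Prop) :
    (colorClass S c).encard = ((S : Set M) ∩ colorClass M c).encard := by
  rw [← Subtype.val_injective.encard_image]
  exact congrArg encard (Subtype.image_preimage_coe (S : Set M) (colorClass M c))

theorem exists_finite_colorCountsAgreeUpTo [L.IsRelational] [Finite (L.Relations 1)]
    (M : Type*) [L.Structure M] (K : ℕ) :
    ∃ A : Set M, A.Finite ∧ ColorCountsAgreeUpTo L (Substructure.closure L A) M K := by
  choose t ht_sub ht_card using fun c : L.Relations 1 → Prop =>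
    exists_subset_encard_eq (min_le_right (K : ℕ∞) (colorClass M c).encard)
  refine ⟨⋃ c, t c, finite_iUnion fun c => finite_of_encard_le_coe ((ht_card c).trans_le
    (min_le_left _ _)), fun c => ?_⟩
  have hA : (⋃ c', t c') ∩ colorClass M c = t c := by
    refine Subset.antisymm ?_ fun x hx => ⟨mem_iUnion.2 ⟨c, hx⟩, ht_sub c hx⟩
    rintro x ⟨hx, hxc⟩
    obtain ⟨c', hx'⟩ := mem_iUnion.1 hx
    exact (show c' = c from (ht_sub c' hx').symm.trans hxc) ▸ hx'
  rw [encard_colorClass_substructure, Substructure.closure_eq_of_isRelational, hA, ht_card]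
  exact min_eq_right (min_le_left _ _)

end Unary

theorem countablyApproximable_of_finite_unary [L.IsRelational] [Finite (L.Relations 1)]
    (hunary : ∀ n, n ≠ 1 → IsEmpty (L.Relations n)) (M : Type*) [L.Structure M] [Infinite M] :
    CountablyApproximable (L.completeTheory M) := by
  choose A hA_fin hA using fun n : ℕ => exists_finite_colorCountsAgreeUpTo (L := L) M (n + 1)
  have _ (n : ℕ) : Nonempty (Substructure.closure L (A n)) := (hA n).nonempty
  have _ (n : ℕ) : Finite (Substructure.closure L (A n)) := by
    rw [← SetLike.coe_sort_coe, Substructure.closure_eq_of_isRelational]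
    exact (hA_fin n).to_subtype
  refine countablyApproximable_completeTheory_of_cover (fun n => Substructure.closure L (A n))
    (fun n => exists_sentence_of_infinite_of_finite M _) fun φ hφ => ⟨quantifierDepth φ, ?_⟩
  exact (realize_sentence_iff_of_colorCountsAgreeUpTo hunary (hA _) (Nat.le_succ _)).2 hφ

/-- a complete theory of a purely unary relational language, all of whose models
are infinite, is countably approximable. -/
theorem unary_countably_approximable
    {L : FirstOrder.Language.{u, v}} [L.IsRelational]
    (hunary : ∀ n, n ≠ 1 → IsEmpty (L.Relations n))
    (T : L.Theory) (hT : CompleteTheory T)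
    (hinf : ∀ M : Theory.ModelType.{u, v, max u v} T, Infinite M) :
    ∃ 𝒯 : Set L.Theory, 𝒯.Countable ∧ (∀ S ∈ 𝒯, CompleteTheory S) ∧
      Approximated 𝒯 T := by
  obtain ⟨M⟩ := hT.1
  have := hinf M
  rw [hT.eq_completeTheory M]
  rcases finite_or_infinite (L.Relations 1) with _ | _
  · exact countablyApproximable_of_finite_unary hunary M
  · have : Infinite (Σ l, L.Relations l) := Infinite.of_injective _ (sigma_mk_injective (i := 1))
    exact countablyApproximable_of_infinite_relations M

end Approx
end
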